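/- Let f : M̃_1 → M̃_2 be a quasi-isometry between the universal coverings of two closed hyperbolic manifolds M_1 and M_2. Let α be a geodesic in M̃_1 and P a hyperplane orthogonal to α, and let β be the geodesic in M̃_2 which remains at bounded distance from f(α). Then there exists a constant C, depending only on the quasi-isometry constants of f, such that the orthogonal projection of f(P) onto β has diameter ≤ C. -/

import Mathlib

noncomputable section

open scoped Topology ENNReal
open Filter

/-! ### The hyperboloid model of hyperbolic `n`-space -/

/-- The Minkowski bilinear form on `ℝ^{n+1}`. -/
def mink (n : ℕ) (x y : Fin (n + 1) → ℝ) : ℝ :=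
  (∑ i : Fin n, x i.castSucc * y i.castSucc) - x (Fin.last n) * y (Fin.last n)

/-- The hyperboloid model of hyperbolic `n`-space: the upper sheet of the
two-sheeted hyperboloid `⟨x,x⟩ = -1` in Minkowski space. -/
def Hyp (n : ℕ) : Type :=
  { x : Fin (n + 1) → ℝ // mink n x x = -1 ∧ 0 < x (Fin.last n) }

/-- The statement that a metric on the hyperboloid is the genuine hyperbolic metric:
`cosh (dist x y) = -⟨x,y⟩`. -/
def IsHypMetric (n : ℕ) [MetricSpace (Hyp n)] : Prop :=
  ∀ x y : Hyp n, Real.cosh (dist x y) = -(mink n x.1 y.1)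

/-- The global chart of hyperbolic `n`-space: vertical projection of the upper
sheet of the hyperboloid onto `ℝⁿ`. -/
def hypChart (n : ℕ) (x : Hyp n) : EuclideanSpace ℝ (Fin n) := WithLp.toLp 2 (fun i : Fin n => x.1 i.castSucc)

/-- The inverse of the global chart `hypChart`. -/
def hypChartInv (n : ℕ) (v : EuclideanSpace ℝ (Fin n)) : Hyp n :=
  ⟨Fin.snoc (fun i => v i) (Real.sqrt (1 + ∑ i, v i * v i)), by
    have hv : (0:ℝ) ≤ ∑ i, v i * v i :=
      Finset.sum_nonneg fun i _ => mul_self_nonneg (v i)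
    constructor
    · simp only [mink, Fin.snoc_castSucc, Fin.snoc_last]
      rw [Real.mul_self_sqrt (by linarith)]
      ring
    · simp only [Fin.snoc_last]
      exact Real.sqrt_pos.mpr (by linarith)⟩

/-- The sphere at infinity `S^{n-1}` of hyperbolic `n`-space. -/
abbrev Sph (n : ℕ) := Metric.sphere (0 : EuclideanSpace ℝ (Fin n)) 1

/-- Radial projection of the hyperboloid towards the sphere at infinity. -/
def sphProj {n : ℕ} (x : Hyp n) : EuclideanSpace ℝ (Fin n) :=
  WithLp.toLp 2 (fun i : Fin n => x.1 i.castSucc / x.1 (Fin.last n))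

/-- `ξ` is the endpoint at infinity of the curve `c` in hyperbolic space. -/
def RayLimit {n : ℕ} (c : ℝ → Hyp n) (ξ : EuclideanSpace ℝ (Fin n)) : Prop :=
  Tendsto (fun t => sphProj (c t)) atTop (𝓝 ξ)

/-- A geodesic ray, parametrised by arc length, for the leafwise distance `d`. -/
def IsRay {n : ℕ} (d : Hyp n → Hyp n → ℝ) (c : ℝ → Hyp n) : Prop :=
  ∀ s t : ℝ, 0 ≤ s → 0 ≤ t → d (c s) (c t) = |s - t|

/-- A complete geodesic line, parametrised by arc length, for the distance `d`. -/
def IsGeodesicLine {n : ℕ} (d : Hyp n → Hyp n → ℝ) (c : ℝ → Hyp n) : Prop :=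
  ∀ s t : ℝ, d (c s) (c t) = |s - t|

/-- Two curves (defined on `[0,∞)`) remain at (uniformly) bounded distance
from each other, measured with respect to the distance `d`. -/
def AsympImage {n : ℕ} (d : Hyp n → Hyp n → ℝ) (c₁ c₂ : ℝ → Hyp n) : Prop :=
  ∃ C : ℝ, (∀ t, 0 ≤ t → ∃ s, 0 ≤ s ∧ d (c₁ t) (c₂ s) ≤ C) ∧
    (∀ s, 0 ≤ s → ∃ t, 0 ≤ t ∧ d (c₂ s) (c₁ t) ≤ C)

/-- A `(C₁, C₂)`-quasi-isometry in Gromov's sense between two sets endowed with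
distance functions. -/
def IsQuasiIsometry {α β : Type*} (d₁ : α → α → ℝ) (d₂ : β → β → ℝ) (f : α → β)
    (C₁ C₂ : ℝ) : Prop :=
  (∀ x x', d₂ (f x) (f x') ≤ C₁ * d₁ x x' + C₂) ∧
  (∀ x x', C₁⁻¹ * d₁ x x' - C₂ ≤ d₂ (f x) (f x')) ∧
  (∀ z, ∃ x, d₂ (f x) z ≤ C₂)

/-! ### Homeomorphism groups -/

instance homeoGroup (X : Type*) [TopologicalSpace X] : Group (X ≃ₜ X) where
  one := Homeomorph.refl X
  mul e₁ e₂ := e₂.trans e₁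
  inv := Homeomorph.symm
  mul_assoc _ _ _ := rfl
  one_mul _ := Homeomorph.ext fun _ => rfl
  mul_one _ := Homeomorph.ext fun _ => rfl
  inv_mul_cancel e := Homeomorph.ext e.symm_apply_apply

@[simp] theorem homeo_one_apply {X : Type*} [TopologicalSpace X] (x : X) :
    (1 : X ≃ₜ X) x = x := rfl

@[simp] theorem homeo_mul_apply {X : Type*} [TopologicalSpace X] (e₁ e₂ : X ≃ₜ X) (x : X) :
    (e₁ * e₂) x = e₁ (e₂ x) := rfl

@[simp] theorem homeo_inv_apply_self {X : Type*} [TopologicalSpace X] (e : X ≃ₜ X) (x : X) :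
    e⁻¹ (e x) = x := e.symm_apply_apply x

/-- The representation by left translations of a group homomorphism into a
topological group. -/
def leftTransRep {Γ G : Type*} [Group Γ] [Group G] [TopologicalSpace G]
    [IsTopologicalGroup G] (f : Γ →* G) : Γ →* (G ≃ₜ G) where
  toFun γ := Homeomorph.mulLeft (f γ)
  map_one' := by ext x; simp
  map_mul' γ γ' := by ext x; simp [mul_assoc]

/-- The representation by homeomorphisms underlying a representation by isometries. -/
def isoRep {Γ F : Type*} [Group Γ] [MetricSpace F] (f : Γ →* (F ≃ᵢ F)) : Γ →* (F ≃ₜ F) where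
  toFun γ := (f γ).toHomeomorph
  map_one' := by ext x; simp
  map_mul' γ γ' := by ext x; simp

section Geometry

variable {n : ℕ} [MetricSpace (Hyp n)]
variable {Γ : Type*} [Group Γ]

/-- `Γ` acts freely, properly discontinuously and cocompactly by isometries on
hyperbolic `n`-space: equivalently, `Γ` is (isomorphic to) the fundamental group
of a connected closed hyperbolic `n`-manifold, namely the quotient of the
action, acting by deck transformations on the universal covering. -/
def IsCompactHypAction (act : Γ →* (Hyp n ≃ᵢ Hyp n)) : Prop :=
  (∀ (γ : Γ) (x : Hyp n), act γ x = x → γ = 1) ∧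
  (∀ K : Set (Hyp n), IsCompact K → {γ : Γ | ((act γ '' K) ∩ K).Nonempty}.Finite) ∧
  (∃ K : Set (Hyp n), IsCompact K ∧ ∀ x : Hyp n, ∃ γ : Γ, act γ x ∈ K)

variable {Y : Type*} [TopologicalSpace Y]

/-- The setoid of the diagonal action `γ·(x,y) = (γ x, ρ(γ) y)` of `Γ` on `M̃ × Y`. -/
def suspSetoid (act : Γ →* (Hyp n ≃ᵢ Hyp n)) (ρ : Γ →* (Y ≃ₜ Y)) :
    Setoid (Hyp n × Y) where
  r p q := ∃ γ : Γ, act γ p.1 = q.1 ∧ ρ γ p.2 = q.2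
  iseqv := by
    constructor
    · intro p; exact ⟨1, by simp, by simp⟩
    · rintro p q ⟨γ, h1, h2⟩
      exact ⟨γ⁻¹, by simp [← h1], by simp [← h2]⟩
    · rintro p q r ⟨γ, h1, h2⟩ ⟨γ', h1', h2'⟩
      refine ⟨γ' * γ, ?_, ?_⟩
      · rw [map_mul]; simp [IsometryEquiv.mul_apply, h1, h1']
      · rw [map_mul]; simp [h2, h2']

/-- The suspension `M_ρ = Γ\(M̃ × Y)` of the representation `ρ`. -/
abbrev Susp (act : Γ →* (Hyp n ≃ᵢ Hyp n)) (ρ : Γ →* (Y ≃ₜ Y)) : Type _ :=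
  Quotient (suspSetoid act ρ)

/-- `Γ` acts freely, properly discontinuously and cocompactly (diagonally) on
the foliated product `M̃ × Y`. -/
def IsProperCocompactDiagAction (act : Γ →* (Hyp n ≃ᵢ Hyp n)) (ρ : Γ →* (Y ≃ₜ Y)) : Prop :=
  (∀ (γ : Γ) (p : Hyp n × Y), act γ p.1 = p.1 → ρ γ p.2 = p.2 → γ = 1) ∧
  (∀ K : Set (Hyp n × Y), IsCompact K →
    {γ : Γ | ((fun p : Hyp n × Y => (act γ p.1, ρ γ p.2)) '' K ∩ K).Nonempty}.Finite) ∧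
  (∃ K : Set (Hyp n × Y), IsCompact K ∧
    ∀ p : Hyp n × Y, ∃ γ : Γ, (act γ p.1, ρ γ p.2) ∈ K)

/-- Two points of a quotient of `M̃ × Y` lie on the same leaf of the induced
lamination if they admit representatives with the same transverse coordinate. -/
def sameLeafQ {n : ℕ} {Y : Type*} (s : Setoid (Hyp n × Y)) (a b : Quotient s) : Prop :=
  ∃ (x x' : Hyp n) (y : Y), Quotient.mk s (x, y) = a ∧ Quotient.mk s (x', y) = b

/-- The leafwise distance on a quotient of `M̃ × Y` induced by a (`Γ`-invariant)
leafwise family `d` of distances: the infimum of the distances between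
representatives in a common horizontal leaf.  For two points on a common leaf,
this is the genuine distance on that leaf. -/
def leafDistQ {n : ℕ} {Y : Type*} (s : Setoid (Hyp n × Y)) (d : Y → Hyp n → Hyp n → ℝ)
    (a b : Quotient s) : ℝ :=
  sInf { r : ℝ | ∃ (x x' : Hyp n) (y : Y),
    Quotient.mk s (x, y) = a ∧ Quotient.mk s (x', y) = b ∧ d y x x' = r }

end Geometry

/-! ### Leafwise notions for foliated spaces -/

/-- `f` and `g` are homotopic through a homotopy moving points along the leaves
(an *integral homotopy*), the leaves being the classes of the relation `Leaf`. -/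
def IntegralHomotopicTo {A B : Type*} [TopologicalSpace A] [TopologicalSpace B]
    (Leaf : B → B → Prop) (f g : A → B) : Prop :=
  ∃ H : ℝ → A → B, Continuous (fun p : ℝ × A => H p.1 p.2) ∧
    H 0 = f ∧ H 1 = g ∧ ∀ t a, Leaf (H t a) (g a)

/-- Ordinary homotopy of maps. -/
def HomotopicMaps {A B : Type*} [TopologicalSpace A] [TopologicalSpace B]
    (f g : A → B) : Prop :=
  ∃ H : ℝ → A → B, Continuous (fun p : ℝ × A => H p.1 p.2) ∧ H 0 = f ∧ H 1 = g

/-- Ordinary homotopy equivalence. -/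
def IsHtpyEquiv {A B : Type*} [TopologicalSpace A] [TopologicalSpace B] (h : A → B) : Prop :=
  Continuous h ∧ ∃ h' : B → A, Continuous h' ∧
    HomotopicMaps (h' ∘ h) id ∧ HomotopicMaps (h ∘ h') id

/-- A foliated map: it sends leaves to leaves. -/
def IsLeafPreserving {A B : Type*} (L₁ : A → A → Prop) (L₂ : B → B → Prop) (f : A → B) : Prop :=
  ∀ a a', L₁ a a' → L₂ (f a) (f a')

/-- A leafwise homotopy equivalence: a homotopy equivalence `h` with homotopy
inverse `h'` such that both are foliated maps and `h' ∘ h`, `h ∘ h'` are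
homotopic to the identity through integral homotopies. -/
def IsLeafwiseHtpyEquiv {A B : Type*} [TopologicalSpace A] [TopologicalSpace B]
    (L₁ : A → A → Prop) (L₂ : B → B → Prop) (h : A → B) : Prop :=
  Continuous h ∧ IsLeafPreserving L₁ L₂ h ∧
    ∃ h' : B → A, Continuous h' ∧ IsLeafPreserving L₂ L₁ h' ∧
      IntegralHomotopicTo L₁ (h' ∘ h) id ∧ IntegralHomotopicTo L₂ (h ∘ h') id

/-! ### Leafwise Riemannian metrics on suspensions -/

/-- A leafwise Riemannian metric on the suspension `Γ\(M̃ × F)`, described by its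
`Γ`-invariant lift to the foliated product `M̃ × F`: a family, indexed by the
transverse coordinate `y ∈ F`, of geodesic distance functions on the leaves
`M̃ × {y}`, varying continuously in the transverse direction. -/
structure LeafwiseMetric {n : ℕ} [MetricSpace (Hyp n)] {Γ : Type*} [Group Γ]
    {F : Type*} [TopologicalSpace F] (act : Γ →* (Hyp n ≃ᵢ Hyp n)) (ρ : Γ →* (F ≃ₜ F)) where
  d : F → Hyp n → Hyp n → ℝ
  nonneg : ∀ y x x', 0 ≤ d y x x'
  eq_zero_iff : ∀ y x x', d y x x' = 0 ↔ x = x'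
  symm : ∀ y x x', d y x x' = d y x' x
  triangle : ∀ y x x' x'', d y x x'' ≤ d y x x' + d y x' x''
  invariant : ∀ (γ : Γ) y x x', d (ρ γ y) (act γ x) (act γ x') = d y x x'
  cont : Continuous fun p : F × Hyp n × Hyp n => d p.1 p.2.1 p.2.2
  geodesic : ∀ y x x', ∃ c : ℝ → Hyp n, c 0 = x ∧ c (d y x x') = x' ∧
    ∀ s t : ℝ, 0 ≤ s → s ≤ t → t ≤ d y x x' → d y (c s) (c t) = t - s

/-- A leafwise Riemannian metric is hyperbolic (all leafwise sectional curvatures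
equal `-1`) iff every leaf is isometric to hyperbolic `n`-space. -/
def LeafwiseMetric.IsHyperbolic {n : ℕ} [MetricSpace (Hyp n)] {Γ : Type*} [Group Γ]
    {F : Type*} [TopologicalSpace F] {act : Γ →* (Hyp n ≃ᵢ Hyp n)} {ρ : Γ →* (F ≃ₜ F)}
    (g : LeafwiseMetric act ρ) : Prop :=
  ∀ y : F, ∃ e : Hyp n → Hyp n, Function.Bijective e ∧
    ∀ x x', g.d y x x' = dist (e x) (e x')

/-- A leafwise hyperbolic metric together with a choice of leafwise
uniformisations, i.e. isometric identifications of each leaf with the standard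
hyperbolic `n`-space, transversely continuous. -/
structure HypLeafwiseMetric {n : ℕ} [MetricSpace (Hyp n)] {Γ : Type*} [Group Γ]
    {F : Type*} [TopologicalSpace F] (act : Γ →* (Hyp n ≃ᵢ Hyp n)) (ρ : Γ →* (F ≃ₜ F))
    extends LeafwiseMetric act ρ where
  unif : F → Hyp n → Hyp n
  unif_bij : ∀ y, Function.Bijective (unif y)
  unif_iso : ∀ y x x', d y x x' = dist (unif y x) (unif y x')
  unif_cont : Continuous fun p : Hyp n × F => unif p.2 p.1

/-- `ρ(Γ)` preserves an ergodic probability measure on `F` with full support. -/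
def ErgodicFullSupportInvariant {Γ : Type*} [Group Γ] {F : Type*} [TopologicalSpace F]
    [MeasurableSpace F] (ρ : Γ →* (F ≃ₜ F)) (μ : MeasureTheory.Measure F) : Prop :=
  MeasureTheory.IsProbabilityMeasure μ ∧
  (∀ γ : Γ, MeasureTheory.Measure.map (ρ γ) μ = μ) ∧
  (∀ s : Set F, MeasurableSet s → (∀ γ : Γ, (ρ γ) ⁻¹' s = s) → μ s = 0 ∨ μ s = 1) ∧
  (∀ U : Set F, IsOpen U → U.Nonempty → 0 < μ U)
section Extra

variable {n : ℕ} [MetricSpace (Hyp n)] {Γ : Type*} [Group Γ]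

/-- The setoid of the action of (a subgroup of) `Γ` on `M̃` by deck transformations. -/
def coverSetoid (act : Γ →* (Hyp n ≃ᵢ Hyp n)) (H : Subgroup Γ) : Setoid (Hyp n) where
  r x x' := ∃ γ ∈ H, act γ x = x'
  iseqv := by
    constructor
    · intro x; exact ⟨1, H.one_mem, by simp⟩
    · rintro x x' ⟨γ, hγ, h⟩
      exact ⟨γ⁻¹, H.inv_mem hγ, by simp [← h]⟩
    · rintro x x' x'' ⟨γ, hγ, h⟩ ⟨γ', hγ', h'⟩
      refine ⟨γ' * γ, H.mul_mem hγ' hγ, ?_⟩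
      rw [map_mul]; simp [IsometryEquiv.mul_apply, h, h']

/-- The covering manifold `H\M̃` associated to a subgroup `H ≤ Γ`. -/
abbrev CoverMfd (act : Γ →* (Hyp n ≃ᵢ Hyp n)) (H : Subgroup Γ) : Type _ :=
  Quotient (coverSetoid act H)

/-- The base manifold `M = Γ\M̃`. -/
abbrev Mfd (act : Γ →* (Hyp n ≃ᵢ Hyp n)) : Type _ := CoverMfd act ⊤

/-- The quotient (Riemannian) distance on the covering manifold `H\M̃`. -/
def coverDist (act : Γ →* (Hyp n ≃ᵢ Hyp n)) (H : Subgroup Γ)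
    (a b : CoverMfd act H) : ℝ :=
  sInf { r : ℝ | ∃ x x' : Hyp n, Quotient.mk (coverSetoid act H) x = a ∧
    Quotient.mk (coverSetoid act H) x' = b ∧ dist x x' = r }

variable {F : Type*} [TopologicalSpace F]

/-- The bundle projection `π : M_ρ → M` of a suspension. -/
def suspProj (act : Γ →* (Hyp n ≃ᵢ Hyp n)) (ρ : Γ →* (F ≃ₜ F)) :
    Susp act ρ → Mfd act :=
  Quotient.lift (fun p : Hyp n × F => Quotient.mk (coverSetoid act ⊤) p.1)
    (by rintro p q ⟨γ, h1, _⟩; exact Quotient.sound ⟨γ, trivial, h1⟩)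

/-- A map `M̃ × F → M̃`, viewed as a family of maps of the leaves, is *leafwise
smooth* if it is smooth in the leaf direction (read in the global chart of the
hyperboloid model). -/
def LeafwiseSmooth (H₁ : Hyp n × F → Hyp n) : Prop :=
  ∀ y : F, ContDiff ℝ (⊤ : ℕ∞) fun v : EuclideanSpace ℝ (Fin n) =>
    hypChart n (H₁ (hypChartInv n v, y))

end Extra

/-! ### Towers of coverings and solenoids -/

section Tower

variable {n : ℕ} [MetricSpace (Hyp n)] {Γ : Type*} [Group Γ]

/-- A tower of (pointed) finite coverings of the closed manifold `Γ\M̃`: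
a decreasing chain of finite-index subgroups starting at `Γ` itself,
each inclusion being proper (the coverings are non-trivial). -/
def IsCoveringTower (Gs : ℕ → Subgroup Γ) : Prop :=
  Gs 0 = ⊤ ∧ (∀ m, Gs (m + 1) ≤ Gs m) ∧ (∀ m, (Gs m).FiniteIndex) ∧
    (∀ m, Gs (m + 1) ≠ Gs m)

/-- The bonding map `M_{m+1} → M_m` of a tower of coverings. -/
def towerProj (act : Γ →* (Hyp n ≃ᵢ Hyp n)) {Gs : ℕ → Subgroup Γ}
    (hGs : IsCoveringTower Gs) (m : ℕ) :
    CoverMfd act (Gs (m + 1)) → CoverMfd act (Gs m) :=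
  Quotient.lift (fun x : Hyp n => Quotient.mk (coverSetoid act (Gs m)) x)
    (by rintro x x' ⟨γ, hγ, h⟩; exact Quotient.sound ⟨γ, hGs.2.1 m hγ, h⟩)

/-- The solenoidal manifold obtained as the inverse limit of a tower of finite
coverings. -/
abbrev Solenoid (act : Γ →* (Hyp n ≃ᵢ Hyp n)) {Gs : ℕ → Subgroup Γ}
    (hGs : IsCoveringTower Gs) : Type _ :=
  { u : ∀ m : ℕ, CoverMfd act (Gs m) // ∀ m, towerProj act hGs m (u (m + 1)) = u m }

/-- The leafwise distance on the solenoid induced by the pull-back of the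
hyperbolic metric of the base: for two points on a common leaf (= path
component) it is the leafwise Riemannian distance, namely the supremum of the
quotient distances in the finite coverings. -/
def solDist (act : Γ →* (Hyp n ≃ᵢ Hyp n)) {Gs : ℕ → Subgroup Γ}
    (hGs : IsCoveringTower Gs) (a b : Solenoid act hGs) : ℝ≥0∞ :=
  ⨆ m : ℕ, ENNReal.ofReal (coverDist act (Gs m) (a.1 m) (b.1 m))

/-- A leafwise hyperbolic metric on a solenoidal manifold `X`: a leafwise
distance function, finite exactly on pairs of points on a common leaf
(= path component), which is a metric on every leaf, transversely lower
semicontinuous, and locally isometric to hyperbolic `n`-space along the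
leaves (all leafwise sectional curvatures equal `-1`). -/
structure SolHypMetric (n : ℕ) [MetricSpace (Hyp n)] (X : Type*) [TopologicalSpace X] where
  d : X → X → ℝ≥0∞
  finite_iff : ∀ a b, d a b < ⊤ ↔ Joined a b
  eq_zero_iff : ∀ a b, d a b = 0 ↔ a = b
  symm : ∀ a b, d a b = d b a
  triangle : ∀ a b c, d a c ≤ d a b + d b c
  lsc : LowerSemicontinuous fun p : X × X => d p.1 p.2
  locally_hyperbolic : ∀ a : X, ∃ ε : ℝ, 0 < ε ∧ ∃ (x₀ : Hyp n)
    (φ : { b : X // d a b < ENNReal.ofReal ε } → Hyp n),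
      (∀ b, b.1 = a → φ b = x₀) ∧
      (∀ b c, ENNReal.ofReal (dist (φ b) (φ c)) = d b.1 c.1) ∧
      (∀ z : Hyp n, dist z x₀ < ε → ∃ b, φ b = z)

end Tower
/-! ### Skew solenoidal manifolds -/

section Skew

variable {n : ℕ} [MetricSpace (Hyp n)] {Γ : Type*} [Group Γ]
variable {Y : Type*} [TopologicalSpace Y]

/-- The cocycle identity `φ(γ₁γ₂, y) = φ(γ₁, γ₂·y) φ(γ₂, y)` for a cocycle
over the action `a` with values in the isometry group of hyperbolic space. -/
def IsCocycle (a : Γ →* (Y ≃ₜ Y)) (c : Γ → Y → (Hyp n ≃ᵢ Hyp n)) : Prop :=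
  ∀ (γ₁ γ₂ : Γ) (y : Y) (x : Hyp n),
    c (γ₁ * γ₂) y x = c γ₁ (a γ₂ y) (c γ₂ y x)

theorem cocycle_one {a : Γ →* (Y ≃ₜ Y)} {c : Γ → Y → (Hyp n ≃ᵢ Hyp n)}
    (hc : IsCocycle a c) (y : Y) (x : Hyp n) : c 1 y x = x := by
  have h := hc 1 1 y x
  rw [mul_one] at h
  simp only [map_one, homeo_one_apply] at h
  exact ((c 1 y).injective h).symm

/-- The setoid of the skew action `γ·(x,y) = (φ(γ,y) x, γ·y)` on `M̃ × Y`
defined by a cocycle `φ`. -/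
def skewSetoid (a : Γ →* (Y ≃ₜ Y)) (c : Γ → Y → (Hyp n ≃ᵢ Hyp n))
    (hc : IsCocycle a c) : Setoid (Hyp n × Y) where
  r p q := ∃ γ : Γ, c γ p.2 p.1 = q.1 ∧ a γ p.2 = q.2
  iseqv := by
    constructor
    · intro p; exact ⟨1, cocycle_one hc _ _, by simp⟩
    · rintro ⟨x, y⟩ ⟨x', y'⟩ ⟨γ, h1, h2⟩
      dsimp only at h1 h2
      refine ⟨γ⁻¹, ?_, by simp [← h2]⟩
      have h := hc γ⁻¹ γ y x
      rw [inv_mul_cancel] at h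
      rw [cocycle_one hc] at h
      rw [← h2, ← h1]; exact h.symm
    · rintro ⟨x, y⟩ ⟨x', y'⟩ ⟨x'', y''⟩ ⟨γ, h1, h2⟩ ⟨γ', h1', h2'⟩
      refine ⟨γ' * γ, ?_, ?_⟩
      · rw [hc γ' γ y x, h2, h1, h1']
      · rw [map_mul]; simp [h2, h2']

/-- The skew solenoidal manifold `X = Γ\(ℍⁿ × Y)` associated to a cocycle. -/
abbrev SkewX (a : Γ →* (Y ≃ₜ Y)) (c : Γ → Y → (Hyp n ≃ᵢ Hyp n)) (hc : IsCocycle a c) :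
    Type _ :=
  Quotient (skewSetoid a c hc)

/-- The skew action is free, properly discontinuous and cocompact (so its
quotient is a compact solenoidal manifold). -/
def IsSkewSolenoidAction (a : Γ →* (Y ≃ₜ Y)) (c : Γ → Y → (Hyp n ≃ᵢ Hyp n)) : Prop :=
  (∀ (γ : Γ) (p : Hyp n × Y), c γ p.2 p.1 = p.1 → a γ p.2 = p.2 → γ = 1) ∧
  (∀ K : Set (Hyp n × Y), IsCompact K →
    {γ : Γ | ((fun p : Hyp n × Y => (c γ p.2 p.1, a γ p.2)) '' K ∩ K).Nonempty}.Finite) ∧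
  (∃ K : Set (Hyp n × Y), IsCompact K ∧
    ∀ p : Hyp n × Y, ∃ γ : Γ, (c γ p.2 p.1, a γ p.2) ∈ K)

/-- A leafwise Riemannian metric on a skew solenoidal manifold `Γ\(ℍⁿ × Y)`,
described by its invariant lift to `ℍⁿ × Y`, together with the hyperbolicity
condition (all leafwise sectional curvatures equal `-1`, i.e. every leaf is
isometric to hyperbolic `n`-space). -/
structure SkewLeafwiseMetric (a : Γ →* (Y ≃ₜ Y)) (c : Γ → Y → (Hyp n ≃ᵢ Hyp n)) where
  d : Y → Hyp n → Hyp n → ℝ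
  nonneg : ∀ y x x', 0 ≤ d y x x'
  eq_zero_iff : ∀ y x x', d y x x' = 0 ↔ x = x'
  symm : ∀ y x x', d y x x' = d y x' x
  triangle : ∀ y x x' x'', d y x x'' ≤ d y x x' + d y x' x''
  invariant : ∀ (γ : Γ) y x x', d (a γ y) (c γ y x) (c γ y x') = d y x x'
  cont : Continuous fun p : Y × Hyp n × Hyp n => d p.1 p.2.1 p.2.2
  hyperbolic : ∀ y, ∃ e : Hyp n → Hyp n, Function.Bijective e ∧
    ∀ x x', d y x x' = dist (e x) (e x')

/-- Minimality: every leaf is dense. -/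
def MinimalLeaves {n : ℕ} {Y : Type*} [TopologicalSpace Y] [MetricSpace (Hyp n)]
    (s : Setoid (Hyp n × Y)) : Prop :=
  ∀ p : Hyp n × Y, Dense { q : Quotient s | sameLeafQ s q (Quotient.mk s p) }

end Skew

/-! ### The unit tangent bundle as a space of geodesics, and the geodesic flow -/

section UnitTangent

variable (n : ℕ) [MetricSpace (Hyp n)]

/-- The unit tangent bundle of hyperbolic `n`-space, realised as the space of
unit-speed parametrised geodesic lines (a unit vector is the initial velocity
of a unique such geodesic). -/
abbrev UT : Type _ :=
  { c : ℝ → Hyp n // ∀ s t : ℝ, dist (c s) (c t) = |s - t| }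

variable {n}

/-- The action of an isometry of hyperbolic space on the unit tangent bundle. -/
def utIso (e : Hyp n ≃ᵢ Hyp n) (c : UT n) : UT n :=
  ⟨fun t => e (c.1 t), fun s t => by rw [IsometryEquiv.dist_eq]; exact c.2 s t⟩

/-- The geodesic flow on the unit tangent bundle of hyperbolic space. -/
def utShift (t : ℝ) (c : UT n) : UT n :=
  ⟨fun s => c.1 (s + t), fun s s' => by
    have := c.2 (s + t) (s' + t); simpa using this⟩

variable {Γ : Type*} [Group Γ] {F : Type*} [TopologicalSpace F]

/-- The diagonal `Γ`-action setoid on `T¹M̃ × F`. -/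
def utSetoid (act : Γ →* (Hyp n ≃ᵢ Hyp n)) (ρ : Γ →* (F ≃ₜ F)) :
    Setoid (UT n × F) where
  r p q := ∃ γ : Γ, utIso (act γ) p.1 = q.1 ∧ ρ γ p.2 = q.2
  iseqv := by
    constructor
    · intro p
      refine ⟨1, ?_, by simp⟩
      apply Subtype.ext; funext t; simp [utIso]
    · rintro ⟨c, y⟩ ⟨c', y'⟩ ⟨γ, h1, h2⟩
      dsimp only at h1 h2
      refine ⟨γ⁻¹, ?_, by simp [← h2]⟩
      apply Subtype.ext; funext t
      have := congrArg (fun u : UT n => u.1 t) h1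
      simp only [utIso] at this ⊢
      rw [← this, map_inv]
      simp
    · rintro ⟨c, y⟩ ⟨c', y'⟩ ⟨c'', y''⟩ ⟨γ, h1, h2⟩ ⟨γ', h1', h2'⟩
      refine ⟨γ' * γ, ?_, by rw [map_mul]; simp [h2, h2']⟩
      apply Subtype.ext; funext t
      have e1 := congrArg (fun u : UT n => u.1 t) h1
      have e2 := congrArg (fun u : UT n => u.1 t) h1'
      simp only [utIso] at e1 e2 ⊢
      rw [map_mul, IsometryEquiv.mul_apply, e1, e2]

/-- The foliated unit tangent bundle `M¹_ρ = Γ\(T¹M̃ × F)` of the suspension. -/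
abbrev UTSusp (act : Γ →* (Hyp n ≃ᵢ Hyp n)) (ρ : Γ →* (F ≃ₜ F)) : Type _ :=
  Quotient (utSetoid act ρ)

/-- The foliated geodesic flow on `M¹_ρ`: it preserves every leaf and restricts
to the geodesic flow of each (hyperbolic) leaf. -/
def utFlow (act : Γ →* (Hyp n ≃ᵢ Hyp n)) (ρ : Γ →* (F ≃ₜ F)) (t : ℝ) :
    UTSusp act ρ → UTSusp act ρ :=
  Quotient.map (fun p : UT n × F => (utShift t p.1, p.2))
    (by
      rintro ⟨c, y⟩ ⟨c', y'⟩ ⟨γ, h1, h2⟩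
      refine ⟨γ, ?_, h2⟩
      apply Subtype.ext; funext s
      have := congrArg (fun u : UT n => u.1 (s + t)) h1
      simpa [utIso, utShift] using this)

end UnitTangent
/-! ### Quasi-conformality on metric spaces -/

section QC

/-- The ratio, at scale `r` around `z`, between the maximal displacement of `f`
on the sphere `S_r(z)` and the minimal displacement of `f` over diametrically
opposite points of `S_r(z)`. -/
def qcRatio {α β : Type*} [MetricSpace α] [MetricSpace β] (f : α → β) (z : α) (r : ℝ) : ℝ :=
  sSup { t : ℝ | ∃ z' z'', dist z z' = r ∧ dist z z'' = r ∧ t = dist (f z') (f z'') } /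
  sInf { t : ℝ | ∃ z' z'', dist z z' = r ∧ dist z z'' = r ∧
    (∀ w' w'', dist z w' = r → dist z w'' = r → dist w' w'' ≤ dist z' z'') ∧
    t = dist (f z') (f z'') }

/-- `f` is quasi-conformal at every point, with distortion uniformly bounded by `K`. -/
def UnifQCBound {α β : Type*} [MetricSpace α] [MetricSpace β] (f : α → β) (K : ℝ) : Prop :=
  ∀ z : α, Filter.limsup (fun r => qcRatio f z r) (nhdsWithin (0:ℝ) (Set.Ioi 0)) ≤ K

end QC

/-! ### The boundary action of the holonomy groups -/

section Bdry

variable {n : ℕ} [MetricSpace (Hyp n)] {Γ : Type*} [Group Γ]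
variable {F : Type*} [TopologicalSpace F]

/-- Given the leafwise hyperbolic metric `g` of a suspension, `BdRel g γ p q`
says that the element `γ` of the holonomy group sends the boundary point `p`
of `∂(M̃ × F) ≅ S^{n-1} × F` to the boundary point `q`: some (equivalently,
any) geodesic ray on the leaf `p.2` landing at `p.1` is sent by `γ` to a ray
on the leaf of `q.2` landing at `q.1`.  (Endpoints on the sphere at infinity
are read through the leafwise uniformisations.) -/
def BdRel {act : Γ →* (Hyp n ≃ᵢ Hyp n)} {ρ : Γ →* (F ≃ₜ F)}
    (g : HypLeafwiseMetric act ρ) (γ : Γ) (p q : Sph n × F) : Prop :=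
  q.2 = ρ γ p.2 ∧ ∃ α : ℝ → Hyp n, IsRay (g.d p.2) α ∧
    RayLimit (fun t => g.unif p.2 (α t)) p.1 ∧
    RayLimit (fun t => g.unif q.2 (act γ (α t))) q.1

end Bdry

/-! ### Cantor groups and isometry groups of Cantor sets -/

/-- A Cantor group: a compact, metrisable, totally disconnected, perfect,
topological group. -/
class CantorGroup (G : Type*) [Group G] [TopologicalSpace G] : Prop where
  topGrp : IsTopologicalGroup G
  cpt : CompactSpace G
  t2 : T2Space G
  metr : TopologicalSpace.MetrizableSpace G
  td : TotallyDisconnectedSpace G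
  perf : ∀ g : G, (nhdsWithin g {g}ᶜ).NeBot

attribute [instance] CantorGroup.topGrp CantorGroup.cpt CantorGroup.t2
  CantorGroup.metr CantorGroup.td

/-- A Cantor set: a nonempty compact, totally disconnected, perfect metric space. -/
class CantorSet (F : Type*) [MetricSpace F] : Prop where
  ne : Nonempty F
  cpt : CompactSpace F
  td : TotallyDisconnectedSpace F
  perf : ∀ y : F, (nhdsWithin y {y}ᶜ).NeBot

attribute [instance] CantorSet.cpt CantorSet.td

/-- The data of a suspension of a representation `ρ₁ : Γ₁ → G₁` of a
torsion-free cocompact discrete group `Γ₁` of isometries of hyperbolic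
`n`-space into a Cantor group `G₁`, with dense image. -/
structure CantorGroupSuspData (n : ℕ) [MetricSpace (Hyp n)] where
  Γ₁ : Type
  [grpΓ : Group Γ₁]
  act₁ : Γ₁ →* (Hyp n ≃ᵢ Hyp n)
  geom : IsCompactHypAction act₁
  faithful : Function.Injective act₁
  G₁ : Type
  [grpG : Group G₁]
  [topG : TopologicalSpace G₁]
  [cantor : @CantorGroup G₁ grpG topG]
  ρ₁ : Γ₁ →* G₁
  dense_image : Dense (Set.range ρ₁)

attribute [instance] CantorGroupSuspData.grpΓ CantorGroupSuspData.grpG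
  CantorGroupSuspData.topG CantorGroupSuspData.cantor

/-- The data of a suspension of a representation `ρ₁ : Γ₁ → Isom(F₁)` of a
torsion-free cocompact discrete group `Γ₁` of isometries of hyperbolic
`n`-space into the isometry group of a Cantor set `F₁`, with dense image
(for the topology of pointwise = uniform convergence). -/
structure CantorIsomSuspData (n : ℕ) [MetricSpace (Hyp n)] where
  Γ₁ : Type
  [grpΓ : Group Γ₁]
  act₁ : Γ₁ →* (Hyp n ≃ᵢ Hyp n)
  geom : IsCompactHypAction act₁
  faithful : Function.Injective act₁
  F₁ : Type
  [metrF : MetricSpace F₁]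
  [cantor : @CantorSet F₁ metrF]
  ρ₁ : Γ₁ →* (F₁ ≃ᵢ F₁)
  dense_image : ∀ e : F₁ ≃ᵢ F₁,
    (⇑e : F₁ → F₁) ∈ closure { f : F₁ → F₁ | ∃ γ, f = ⇑(ρ₁ γ) }

attribute [instance] CantorIsomSuspData.grpΓ CantorIsomSuspData.metrF
  CantorIsomSuspData.cantor
/-- The orthogonal hyperplane to the geodesic `α` at the point `α t₀`:
the set of points whose nearest-point projection to `α` is `α t₀`. -/
def orthHyperplane {n : ℕ} [MetricSpace (Hyp n)] (α : ℝ → Hyp n) (t₀ : ℝ) :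
    Set (Hyp n) :=
  { x : Hyp n | ∀ s : ℝ, dist x (α t₀) ≤ dist x (α s) }

/-- `p` is an orthogonal projection of `z` onto the geodesic `β`. -/
def IsProjOn {n : ℕ} [MetricSpace (Hyp n)] (z : Hyp n) (β : ℝ → Hyp n)
    (p : Hyp n) : Prop :=
  ∃ s : ℝ, p = β s ∧ ∀ s' : ℝ, dist z (β s) ≤ dist z (β s')

namespace MinkAux
open Real

variable {n : ℕ}

lemma mink_comm (x y : Fin (n+1) → ℝ) : mink n x y = mink n y x := by
  simp only [mink, mul_comm]

lemma mink_add_left (x y z : Fin (n+1) → ℝ) :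
    mink n (x + y) z = mink n x z + mink n y z := by
  simp only [mink, Pi.add_apply, add_mul, Finset.sum_add_distrib]; ring

lemma mink_sub_left (x y z : Fin (n+1) → ℝ) :
    mink n (x - y) z = mink n x z - mink n y z := by
  simp only [mink, Pi.sub_apply, sub_mul, Finset.sum_sub_distrib]; ring

lemma mink_smul_left (a : ℝ) (x z : Fin (n+1) → ℝ) :
    mink n (a • x) z = a * mink n x z := by
  simp only [mink, Pi.smul_apply, smul_eq_mul, Finset.mul_sum, mul_sub, mul_assoc]

lemma mink_add_right (x y z : Fin (n+1) → ℝ) :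
    mink n x (y + z) = mink n x y + mink n x z := by
  rw [mink_comm, mink_add_left, mink_comm y x, mink_comm z x]

lemma mink_sub_right (x y z : Fin (n+1) → ℝ) :
    mink n x (y - z) = mink n x y - mink n x z := by
  rw [mink_comm, mink_sub_left, mink_comm y x, mink_comm z x]

lemma mink_smul_right (a : ℝ) (x z : Fin (n+1) → ℝ) :
    mink n x (a • z) = a * mink n x z := by
  rw [mink_comm, mink_smul_left, mink_comm]

lemma spacelike_key {A W : Fin (n+1) → ℝ} (hA : mink n A A = -1) (hAW : mink n A W = 0) :
    (∑ i : Fin n, W i.castSucc * W i.castSucc) ≤ (A (Fin.last n))^2 * mink n W W := by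
  have hCS := Finset.sum_mul_sq_le_sq_mul_sq Finset.univ
    (fun i : Fin n => A i.castSucc) (fun i : Fin n => W i.castSucc)
  simp only [mink] at hA hAW ⊢
  simp only [pow_two] at hCS ⊢
  have hAW' : (∑ i : Fin n, A i.castSucc * W i.castSucc)
      = A (Fin.last n) * W (Fin.last n) := by linarith
  rw [hAW'] at hCS
  have hA' : (∑ i : Fin n, A i.castSucc * A i.castSucc)
      = A (Fin.last n) * A (Fin.last n) - 1 := by linarith
  rw [hA'] at hCS
  nlinarith [hCS]

lemma spacelike_nonneg {A W : Fin (n+1) → ℝ} (hA : mink n A A = -1)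
    (hAW : mink n A W = 0) : 0 ≤ mink n W W := by
  have key := spacelike_key hA hAW
  have hSw : (0:ℝ) ≤ ∑ i : Fin n, W i.castSucc * W i.castSucc :=
    Finset.sum_nonneg fun i _ => mul_self_nonneg _
  have ha : 1 ≤ (A (Fin.last n))^2 := by
    have hSa : (0:ℝ) ≤ ∑ i : Fin n, A i.castSucc * A i.castSucc :=
      Finset.sum_nonneg fun i _ => mul_self_nonneg _
    simp only [mink] at hA
    nlinarith
  nlinarith

lemma spacelike_eq_zero {A W : Fin (n+1) → ℝ} (hA : mink n A A = -1)
    (hAW : mink n A W = 0) (h : mink n W W = 0) : W = 0 := by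
  have key := spacelike_key hA hAW
  rw [h, mul_zero] at key
  have hSw : (0:ℝ) ≤ ∑ i : Fin n, W i.castSucc * W i.castSucc :=
    Finset.sum_nonneg fun i _ => mul_self_nonneg _
  have hSw0 : (∑ i : Fin n, W i.castSucc * W i.castSucc) = 0 := le_antisymm key hSw
  have hzero : ∀ i : Fin n, W i.castSucc = 0 := by
    intro i
    have := (Finset.sum_eq_zero_iff_of_nonneg
      (fun j _ => mul_self_nonneg (W j.castSucc))).1 hSw0 i (Finset.mem_univ i)
    nlinarith [this]
  have hlast : W (Fin.last n) = 0 := by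
    simp only [mink, hSw0] at h
    nlinarith [h]
  funext i
  refine Fin.lastCases ?_ ?_ i
  · simpa using hlast
  · intro j; simpa using hzero j

lemma mink_cs {A W W' : Fin (n+1) → ℝ} (hA : mink n A A = -1)
    (hW : mink n A W = 0) (hW' : mink n A W' = 0) :
    (mink n W W')^2 ≤ mink n W W * mink n W' W' := by
  have key : ∀ t : ℝ, 0 ≤ mink n W' W' * (t * t) + (2 * mink n W W') * t + mink n W W := by
    intro t
    have h0 : mink n A (W + t • W') = 0 := by
      rw [mink_add_right, mink_smul_right, hW, hW']; ring
    have := spacelike_nonneg hA h0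
    rw [mink_add_left, mink_add_right, mink_add_right, mink_smul_left, mink_smul_right,
      mink_smul_left, mink_smul_right, mink_comm W' W] at this
    nlinarith [this]
  have := discrim_le_zero key
  simp only [discrim] at this
  nlinarith [this]




lemma one_add_sq_half_le_cosh (t : ℝ) : 1 + t^2/2 ≤ cosh t := by
  have h2 : cosh t = sinh (t/2)^2 + sinh (t/2)^2 + 1 := by
    have h := Real.cosh_two_mul (t/2)
    have h' : (2:ℝ) * (t/2) = t := by ring
    rw [h'] at h
    have hc := Real.cosh_sq (t/2)
    nlinarith [h, hc]
  have hs : (t/2)^2 ≤ sinh (t/2)^2 := by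
    rcases le_or_gt 0 (t/2) with h | h
    · have := Real.self_le_sinh_iff.mpr h
      nlinarith
    · have h1 : 0 ≤ -(t/2) := by linarith
      have := Real.self_le_sinh_iff.mpr h1
      rw [Real.sinh_neg] at this
      nlinarith
  nlinarith

lemma exp_half_le_cosh (t : ℝ) : exp t / 2 ≤ cosh t := by
  rw [Real.cosh_eq]
  have := Real.exp_pos (-t)
  linarith

variable {n : ℕ} [MetricSpace (Hyp n)]

lemma dist_eq_of_cosh_eq {d r : ℝ} (hd : 0 ≤ d) (hr : 0 ≤ r)
    (h : cosh d = cosh r) : d = r := by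
  have h1 := Real.cosh_le_cosh.mp h.le
  have h2 := Real.cosh_le_cosh.mp h.ge
  rw [abs_of_nonneg hd, abs_of_nonneg hr] at h1 h2
  linarith

lemma mink_line (hgeom : IsHypMetric n) {β : ℝ → Hyp n}
    (hβ : ∀ s t : ℝ, dist (β s) (β t) = |s - t|) (s t : ℝ) :
    mink n (β s).1 (β t).1 = -cosh (s - t) := by
  have h := hgeom (β s) (β t)
  rw [hβ s t, Real.cosh_abs] at h
  linarith

lemma geodesic_repr (hgeom : IsHypMetric n) {β : ℝ → Hyp n}
    (hβ : ∀ s t : ℝ, dist (β s) (β t) = |s - t|) :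
    ∃ B : Fin (n+1) → ℝ, mink n B B = 1 ∧ mink n (β 0).1 B = 0 ∧
      ∀ s : ℝ, (β s).1 = cosh s • (β 0).1 + sinh s • B := by
  have mβ := mink_line hgeom hβ
  have hs1 : sinh (1:ℝ) ≠ 0 := ne_of_gt (Real.sinh_pos_iff.mpr one_pos)
  have hc2 : cosh (1:ℝ)^2 = sinh 1^2 + 1 := Real.cosh_sq 1
  refine ⟨(sinh 1)⁻¹ • ((β 1).1 - cosh 1 • (β 0).1), ?_, ?_, ?_⟩
  · simp only [mink_smul_left, mink_smul_right, mink_sub_left, mink_sub_right, mβ]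
    norm_num [Real.cosh_neg]
    field_simp
    linarith
  · simp only [mink_smul_right, mink_sub_right, mink_smul_right, mβ]
    norm_num [Real.cosh_neg]
  · intro s
    have hβB : ∀ r : ℝ, mink n (β r).1 ((sinh 1)⁻¹ • ((β 1).1 - cosh 1 • (β 0).1)) = sinh r := by
      intro r
      simp only [mink_smul_right, mink_sub_right, mink_smul_right, mβ]
      rw [Real.cosh_sub]
      field_simp
      ring
    set B : Fin (n+1) → ℝ := (sinh 1)⁻¹ • ((β 1).1 - cosh 1 • (β 0).1) with hBdef
    have hBB : mink n B B = 1 := by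
      rw [hBdef]
      simp only [mink_smul_left, mink_smul_right, mink_sub_left, mink_sub_right, mβ]
      norm_num [Real.cosh_neg]
      field_simp
      linarith
    set X : Fin (n+1) → ℝ := (β s).1 - (cosh s • (β 0).1 + sinh s • B) with hXdef
    have hXA : mink n (β 0).1 X = 0 := by
      rw [hXdef]
      simp only [mink_sub_right, mink_add_right, mink_smul_right, mβ]
      have h0B : mink n (β 0).1 B = sinh 0 := by
        rw [← hβB 0]
      rw [h0B]
      norm_num [Real.cosh_neg]
    have hXX : mink n X X = 0 := by
      rw [hXdef]
      simp only [mink_sub_left, mink_sub_right, mink_add_left, mink_add_right,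
        mink_smul_left, mink_smul_right, mβ, hBB]
      have h0B : mink n (β 0).1 B = 0 := by
        have := hβB 0; simpa using this
      have hsB : mink n (β s).1 B = sinh s := hβB s
      have hB0 : mink n B (β 0).1 = 0 := by rw [mink_comm]; exact h0B
      have hBs : mink n B (β s).1 = sinh s := by rw [mink_comm]; exact hsB
      rw [h0B, hsB, hB0, hBs]
      have := Real.cosh_sq s
      norm_num
      nlinarith [this]
    have hA : mink n (β 0).1 (β 0).1 = -1 := by
      have := mβ 0 0; simpa using this
    have hX0 : X = 0 := spacelike_eq_zero hA hXA hXX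
    have : (β s).1 - (cosh s • (β 0).1 + sinh s • B) = 0 := hX0
    have := sub_eq_zero.mp this
    exact this

noncomputable def projQ (n : ℕ) (A B : Fin (n+1) → ℝ) (z : Hyp n) : ℝ :=
  Real.sqrt ((mink n z.1 A)^2 - (mink n z.1 B)^2)

noncomputable def projS (n : ℕ) (A B : Fin (n+1) → ℝ) (z : Hyp n) : ℝ :=
  Real.arsinh (mink n z.1 B / projQ n A B z)

lemma mink_A_W {A B : Fin (n+1) → ℝ} (hAA : mink n A A = -1) (hAB : mink n A B = 0)
    (x : Fin (n+1) → ℝ) :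
    mink n A (x + (mink n x A) • A - (mink n x B) • B) = 0 := by
  simp only [mink_add_right, mink_sub_right, mink_smul_right, hAA, hAB]
  rw [mink_comm A x]
  ring

lemma mink_W_W {A B : Fin (n+1) → ℝ} (hAA : mink n A A = -1) (hBB : mink n B B = 1)
    (hAB : mink n A B = 0) (x y : Fin (n+1) → ℝ) :
    mink n (x + (mink n x A) • A - (mink n x B) • B)
           (y + (mink n y A) • A - (mink n y B) • B)
      = mink n x y + (mink n x A) * (mink n y A) - (mink n x B) * (mink n y B) := by
  have hBA : mink n B A = 0 := by rw [mink_comm]; exact hAB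
  simp only [mink_add_left, mink_sub_left, mink_add_right, mink_sub_right,
    mink_smul_left, mink_smul_right, hAA, hBB, hAB, hBA]
  rw [mink_comm A y, mink_comm B y]
  ring

lemma proj_main (hgeom : IsHypMetric n) {β : ℝ → Hyp n} {A B : Fin (n+1) → ℝ}
    (hAA : mink n A A = -1) (hBB : mink n B B = 1) (hAB : mink n A B = 0)
    (hrepr : ∀ s : ℝ, (β s).1 = cosh s • A + sinh s • B) (z : Hyp n) :
    1 ≤ projQ n A B z ∧
    projQ n A B z ^ 2 = (mink n z.1 A)^2 - (mink n z.1 B)^2 ∧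
    projQ n A B z * cosh (projS n A B z) = -(mink n z.1 A) ∧
    projQ n A B z * sinh (projS n A B z) = mink n z.1 B ∧
    (∀ s : ℝ, cosh (dist z (β s)) = projQ n A B z * cosh (s - projS n A B z)) := by
  have hdist : ∀ s : ℝ, cosh (dist z (β s))
      = (-(mink n z.1 A)) * cosh s + (-(mink n z.1 B)) * sinh s := by
    intro s
    rw [hgeom z (β s), hrepr s, mink_add_right, mink_smul_right, mink_smul_right]
    ring
  have hu : 1 ≤ -(mink n z.1 A) := by
    have h0 := hdist 0
    simp only [Real.cosh_zero, Real.sinh_zero] at h0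
    have := Real.one_le_cosh (dist z (β 0))
    nlinarith
  have hWA := mink_A_W hAA hAB z.1
  have hWW := mink_W_W hAA hBB hAB z.1 z.1
  rw [z.2.1] at hWW
  have hnn := spacelike_nonneg hAA hWA
  rw [hWW] at hnn
  have hab2 : 1 ≤ (mink n z.1 A)^2 - (mink n z.1 B)^2 := by nlinarith
  have hq2 : projQ n A B z ^ 2 = (mink n z.1 A)^2 - (mink n z.1 B)^2 :=
    Real.sq_sqrt (by nlinarith)
  have hq1 : 1 ≤ projQ n A B z := by
    unfold projQ
    rw [Real.le_sqrt zero_le_one (by nlinarith)]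
    nlinarith
  have hqpos : 0 < projQ n A B z := lt_of_lt_of_le one_pos hq1
  have hqne : projQ n A B z ≠ 0 := ne_of_gt hqpos
  have hcosh : projQ n A B z * cosh (projS n A B z) = -(mink n z.1 A) := by
    unfold projS
    rw [Real.cosh_arsinh]
    have h1 : 1 + (mink n z.1 B / projQ n A B z)^2
        = (mink n z.1 A)^2 / (projQ n A B z)^2 := by
      field_simp
      linarith [hq2]
    rw [h1, Real.sqrt_div (sq_nonneg _), Real.sqrt_sq_eq_abs,
      Real.sqrt_sq hqpos.le, abs_of_nonpos (by linarith : mink n z.1 A ≤ 0)]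
    field_simp
  have hsinh : projQ n A B z * sinh (projS n A B z) = mink n z.1 B := by
    unfold projS
    rw [Real.sinh_arsinh]
    field_simp
  refine ⟨hq1, hq2, hcosh, hsinh, fun s => ?_⟩
  rw [hdist s, Real.cosh_sub]
  linear_combination (-(cosh s)) * hcosh + (sinh s) * hsinh

set_option maxHeartbeats 2000000 in
lemma proj_disp (hgeom : IsHypMetric n) {A B : Fin (n+1) → ℝ} {β : ℝ → Hyp n}
    (hAA : mink n A A = -1) (hBB : mink n B B = 1) (hAB : mink n A B = 0)
    (hrepr : ∀ s : ℝ, (β s).1 = cosh s • A + sinh s • B) (z z' : Hyp n) :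
    (projS n A B z - projS n A B z')^2 * (projQ n A B z * projQ n A B z')
      ≤ 2 * cosh (dist z z') := by
  obtain ⟨hq1, hq2, hc, hs, -⟩ := proj_main hgeom hAA hBB hAB hrepr z
  obtain ⟨hq1', hq2', hc', hs', -⟩ := proj_main hgeom hAA hBB hAB hrepr z'
  have hWz := mink_W_W hAA hBB hAB z.1 z.1
  rw [z.2.1] at hWz
  have hWz' := mink_W_W hAA hBB hAB z'.1 z'.1
  rw [z'.2.1] at hWz'
  have hWzz' := mink_W_W hAA hBB hAB z.1 z'.1
  have hCS := mink_cs hAA (mink_A_W hAA hAB z.1) (mink_A_W hAA hAB z'.1)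
  rw [hWz, hWz', hWzz'] at hCS
  have hm : mink n z.1 z'.1 = -cosh (dist z z') := by
    have := hgeom z z'; linarith
  rw [hm] at hCS
  have hprod : (projQ n A B z * projQ n A B z') * cosh (projS n A B z - projS n A B z')
      = (mink n z.1 A) * (mink n z'.1 A) - (mink n z.1 B) * (mink n z'.1 B) := by
    rw [Real.cosh_sub]
    linear_combination (projQ n A B z' * cosh (projS n A B z')) * hc
      + (-(mink n z.1 A)) * hc' - (projQ n A B z' * sinh (projS n A B z')) * hs
      - (mink n z.1 B) * hs'
  have hqq : (0:ℝ) < projQ n A B z * projQ n A B z' := by nlinarith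
  have ea : (-1 + mink n (z.1) A * mink n (z.1) A - mink n (z.1) B * mink n (z.1) B)
      = projQ n A B z ^ 2 - 1 := by linear_combination (-1 : ℝ) * hq2
  have ea' : (-1 + mink n (z'.1) A * mink n (z'.1) A - mink n (z'.1) B * mink n (z'.1) B)
      = projQ n A B z' ^ 2 - 1 := by linear_combination (-1 : ℝ) * hq2'
  rw [ea, ea'] at hCS
  have hCS2 : (-cosh (dist z z') + mink n (z.1) A * mink n (z'.1) A
      - mink n (z.1) B * mink n (z'.1) B)^2 ≤ (projQ n A B z * projQ n A B z')^2 := by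
    refine le_trans hCS ?_
    have e1 : projQ n A B z ^ 2 - 1 ≤ projQ n A B z ^ 2 := by linarith
    have e2 : projQ n A B z' ^ 2 - 1 ≤ projQ n A B z' ^ 2 := by linarith
    have e3 : (0:ℝ) ≤ projQ n A B z ^ 2 - 1 := by nlinarith
    have e4 : (0:ℝ) ≤ projQ n A B z' ^ 2 := by positivity
    calc (projQ n A B z ^ 2 - 1) * (projQ n A B z' ^ 2 - 1)
        ≤ projQ n A B z ^ 2 * projQ n A B z' ^ 2 :=
          mul_le_mul e1 e2 (by nlinarith) (by positivity)
      _ = (projQ n A B z * projQ n A B z')^2 := by ring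
  have habs : |(-cosh (dist z z') + mink n (z.1) A * mink n (z'.1) A
      - mink n (z.1) B * mink n (z'.1) B)| ≤ projQ n A B z * projQ n A B z' := by
    have h1 := Real.sqrt_le_sqrt hCS2
    rwa [Real.sqrt_sq_eq_abs, Real.sqrt_sq hqq.le] at h1
  have hbound : (mink n z.1 A) * (mink n z'.1 A) - (mink n z.1 B) * (mink n z'.1 B)
      ≤ cosh (dist z z') + projQ n A B z * projQ n A B z' := by
    have := (abs_le.mp habs).2
    linarith
  have h5 : (projQ n A B z * projQ n A B z')
        * (1 + (projS n A B z - projS n A B z')^2/2)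
      ≤ (projQ n A B z * projQ n A B z') * cosh (projS n A B z - projS n A B z') :=
    mul_le_mul_of_nonneg_left (one_add_sq_half_le_cosh _) hqq.le
  nlinarith [h5, hprod, hbound]

lemma sqrt_exp_eq (t : ℝ) : Real.sqrt (Real.exp t) = Real.exp (t/2) := by
  rw [show Real.exp t = (Real.exp (t/2))^2 by rw [sq, ← Real.exp_add]; norm_num]
  exact Real.sqrt_sq (Real.exp_pos _).le

lemma segment_exists (hgeom : IsHypMetric n) (x y : Hyp n) (hxy : x ≠ y) :
    ∃ c : ℝ → Hyp n, c 0 = x ∧ c (dist x y) = y ∧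
      ∀ a b : ℝ, dist (c a) (c b) = |a - b| := by
  have hr : 0 < dist x y := dist_pos.mpr hxy
  have hm : mink n x.1 y.1 = -cosh (dist x y) := by
    have h := hgeom x y; linarith
  have hsr : sinh (dist x y) ≠ 0 := ne_of_gt (Real.sinh_pos_iff.mpr hr)
  set r := dist x y with hrdef
  set U : Fin (n+1) → ℝ := (sinh r)⁻¹ • (y.1 - cosh r • x.1) with hU
  have hxx : mink n x.1 x.1 = -1 := x.2.1
  have hyy : mink n y.1 y.1 = -1 := y.2.1
  have hyx : mink n y.1 x.1 = -cosh r := by rw [mink_comm]; exact hm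
  have hUU : mink n U U = 1 := by
    rw [hU]
    simp only [mink_smul_left, mink_smul_right, mink_sub_left, mink_sub_right,
      hxx, hyy, hm, hyx]
    have := Real.cosh_sq r
    field_simp
    nlinarith [this]
  have hxU : mink n x.1 U = 0 := by
    rw [hU]
    simp only [mink_smul_right, mink_sub_right, mink_smul_right, hxx, hm]
    field_simp
    ring
  have hUx : mink n U x.1 = 0 := by rw [mink_comm]; exact hxU
  have hmw : ∀ a b : ℝ, mink n (cosh a • x.1 + sinh a • U)
      (cosh b • x.1 + sinh b • U) = -cosh (a - b) := by
    intro a b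
    simp only [mink_add_left, mink_add_right, mink_smul_left, mink_smul_right,
      hxx, hUU, hxU, hUx]
    rw [Real.cosh_sub]; ring
  set g : ℝ → ℝ := fun a => cosh a * x.1 (Fin.last n) + sinh a * U (Fin.last n) with hg
  have hgeq : ∀ a : ℝ, (cosh a • x.1 + sinh a • U) (Fin.last n) = g a := by
    intro a; simp [hg]
  have hcont : Continuous g := by
    rw [hg]
    exact (Real.continuous_cosh.mul continuous_const).add
      (Real.continuous_sinh.mul continuous_const)
  have hne : ∀ a : ℝ, g a ≠ 0 := by
    intro a h0
    have h1 : mink n (cosh a • x.1 + sinh a • U) (cosh a • x.1 + sinh a • U) = -1 := by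
      have := hmw a a; simpa using this
    have hS : 0 ≤ ∑ i : Fin n, (cosh a • x.1 + sinh a • U) i.castSucc
        * (cosh a • x.1 + sinh a • U) i.castSucc :=
      Finset.sum_nonneg fun i _ => mul_self_nonneg _
    unfold mink at h1
    rw [hgeq a, h0] at h1
    simp only [Pi.add_apply, Pi.smul_apply, smul_eq_mul] at h1 hS
    simp at h1
    linarith
  have hpos : ∀ a : ℝ, 0 < g a := by
    intro a
    by_contra hle
    push_neg at hle
    have h0 : g 0 = x.1 (Fin.last n) := by simp [hg]
    have hx0 : 0 < g 0 := by rw [h0]; exact x.2.2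
    have hlt : g a < 0 := lt_of_le_of_ne hle (hne a)
    rcases le_or_gt a 0 with hc | hc
    · obtain ⟨t, -, ht⟩ := intermediate_value_Icc hc hcont.continuousOn
        (Set.mem_Icc.mpr ⟨hlt.le, hx0.le⟩)
      exact hne t ht
    · obtain ⟨t, -, ht⟩ := intermediate_value_Icc' hc.le hcont.continuousOn
        (Set.mem_Icc.mpr ⟨hlt.le, hx0.le⟩)
      exact hne t ht
  set c : ℝ → Hyp n := fun a => ⟨cosh a • x.1 + sinh a • U,
    by simpa using hmw a a, by rw [hgeq a]; exact hpos a⟩ with hc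
  refine ⟨c, ?_, ?_, ?_⟩
  · apply Subtype.ext
    show cosh 0 • x.1 + sinh 0 • U = x.1
    simp
  · apply Subtype.ext
    show cosh r • x.1 + sinh r • U = y.1
    rw [hU, smul_smul, mul_inv_cancel₀ hsr, one_smul]
    abel
  · intro a b
    have h := hgeom (c a) (c b)
    have h1 : mink n (c a).1 (c b).1 = -cosh (a - b) := hmw a b
    rw [h1] at h
    have h2 : cosh (dist (c a) (c b)) = cosh |a - b| := by rw [Real.cosh_abs]; linarith
    exact dist_eq_of_cosh_eq dist_nonneg (abs_nonneg _) h2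


end MinkAux

set_option maxHeartbeats 2000000 in
/-- **Quasi-isometries project hyperplanes to bounded subsets of geodesics**
(Lemma 5.9.4 of Thurston's notes).  Let `f` be a `(C₁, C₂)`-quasi-isometry
between the universal coverings (`≅ ℍⁿ`) of two closed hyperbolic manifolds,
`α` a geodesic of the source, `P` a hyperplane orthogonal to `α`, and `β` the
geodesic of the target remaining at bounded distance `D` from `f(α)`.  Then
the orthogonal projection of `f(P)` onto `β` has diameter at most a constant
`C` depending only on the quasi-isometry constants of `f` (and on the bound
`D`, itself controlled by those constants through the Morse lemma). -/
theorem projection_of_quasi_isometric_image_of_hyperplane_is_bounded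
    (n : ℕ) [MetricSpace (Hyp n)] (hgeom : IsHypMetric n)
    (C₁ C₂ : ℝ) (hC₁ : 0 < C₁) (hC₂ : 0 ≤ C₂) (D : ℝ) :
    ∃ C : ℝ,
      ∀ (Γ₁ Γ₂ : Type) (_ : Group Γ₁) (_ : Group Γ₂)
        (act₁ : Γ₁ →* (Hyp n ≃ᵢ Hyp n)) (act₂ : Γ₂ →* (Hyp n ≃ᵢ Hyp n)),
        IsCompactHypAction act₁ → IsCompactHypAction act₂ →
      ∀ f : Hyp n → Hyp n,
        IsQuasiIsometry (fun x y : Hyp n => dist x y) (fun x y : Hyp n => dist x y)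
          f C₁ C₂ →
      ∀ (α β : ℝ → Hyp n) (t₀ : ℝ),
        IsGeodesicLine (fun x y : Hyp n => dist x y) α →
        IsGeodesicLine (fun x y : Hyp n => dist x y) β →
        (∀ t : ℝ, ∃ s : ℝ, dist (f (α t)) (β s) ≤ D) →
        (∀ s : ℝ, ∃ t : ℝ, dist (β s) (f (α t)) ≤ D) →
        Metric.diam { p : Hyp n | ∃ x ∈ orthHyperplane α t₀, IsProjOn (f x) β p } ≤ C := by
    classical
  set K := Real.cosh (C₁ + C₂) with hK
  have hK1 : 1 ≤ K := Real.one_le_cosh _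
  set E := 2 * Real.sqrt (Real.cosh (C₁ + C₂)) * Real.exp ((C₂ + D)/2) with hE
  set ρ := Real.exp (-(1/(2*C₁))) with hρ
  have hρ1 : ρ < 1 := by
    rw [hρ]
    apply Real.exp_lt_one_iff.mpr
    have : 0 < 1/(2*C₁) := by positivity
    linarith
  have hρ0 : 0 ≤ ρ := (Real.exp_pos _).le
  have hE0 : 0 ≤ E := by positivity
  have hinv0 : 0 ≤ (1 - ρ)⁻¹ := inv_nonneg.mpr (by linarith)
  have hbound0 : 0 ≤ 2 * (E * (1 - ρ)⁻¹) := by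
    have := mul_nonneg hE0 hinv0; linarith
  refine ⟨2 * (E * (1 - ρ)⁻¹), ?_⟩
  intro Γ₁ Γ₂ _ _ act₁ act₂ _ _ f hf α β t₀ hα hβ hfαβ hβfα
  obtain ⟨hup, hlow, -⟩ := hf
  have hβ' : ∀ s t : ℝ, dist (β s) (β t) = |s - t| := hβ
  obtain ⟨B, hBB, hAB, hrepr⟩ := MinkAux.geodesic_repr hgeom hβ'
  have hAA : mink n (β 0).1 (β 0).1 = -1 := (β 0).2.1
  have pack : ∀ z : Hyp n, 1 ≤ MinkAux.projQ n (β 0).1 B z ∧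
      MinkAux.projQ n (β 0).1 B z ^ 2
        = (mink n z.1 (β 0).1)^2 - (mink n z.1 B)^2 ∧
      MinkAux.projQ n (β 0).1 B z * Real.cosh (MinkAux.projS n (β 0).1 B z)
        = -(mink n z.1 (β 0).1) ∧
      MinkAux.projQ n (β 0).1 B z * Real.sinh (MinkAux.projS n (β 0).1 B z)
        = mink n z.1 B ∧
      (∀ s : ℝ, Real.cosh (dist z (β s))
        = MinkAux.projQ n (β 0).1 B z * Real.cosh (s - MinkAux.projS n (β 0).1 B z)) :=
    fun z => MinkAux.proj_main hgeom hAA hBB hAB hrepr z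
  have huniq : ∀ (z : Hyp n) (p : Hyp n), IsProjOn z β p →
      p = β (MinkAux.projS n (β 0).1 B z) := by
    intro z p hproj
    obtain ⟨s, hp, hmin⟩ := hproj
    obtain ⟨hq1, -, -, -, hcd⟩ := pack z
    have h1 : dist z (β s) ≤ dist z (β (MinkAux.projS n (β 0).1 B z)) :=
      hmin (MinkAux.projS n (β 0).1 B z)
    have h2 : Real.cosh (dist z (β s))
        ≤ Real.cosh (dist z (β (MinkAux.projS n (β 0).1 B z))) :=
      Real.cosh_le_cosh.mpr
        (by rw [abs_of_nonneg dist_nonneg, abs_of_nonneg dist_nonneg]; exact h1)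
    rw [hcd s, hcd (MinkAux.projS n (β 0).1 B z)] at h2
    simp only [sub_self, Real.cosh_zero, mul_one] at h2
    have h3 : Real.cosh (s - MinkAux.projS n (β 0).1 B z) ≤ 1 := by nlinarith
    have h4 : |s - MinkAux.projS n (β 0).1 B z| ≤ |(0:ℝ)| := by
      apply Real.cosh_le_cosh.mp
      rwa [Real.cosh_zero]
    have h5 : s = MinkAux.projS n (β 0).1 B z := by
      simp only [abs_zero] at h4
      have h7 := abs_nonneg (s - MinkAux.projS n (β 0).1 B z)
      have h6 : |s - MinkAux.projS n (β 0).1 B z| = 0 := le_antisymm h4 h7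
      have := abs_eq_zero.mp h6
      linarith
    rw [hp, h5]
  have key : ∀ x ∈ orthHyperplane α t₀,
      |MinkAux.projS n (β 0).1 B (f x) - MinkAux.projS n (β 0).1 B (f (α t₀))|
        ≤ E * (1 - ρ)⁻¹ := by
    intro x hx
    simp only [orthHyperplane, Set.mem_setOf_eq] at hx
    rcases eq_or_ne x (α t₀) with rfl | hne
    · simp only [sub_self, abs_zero]
      exact mul_nonneg hE0 hinv0
    obtain ⟨c, hc0, hcr, hcd⟩ := MinkAux.segment_exists hgeom (α t₀) x hne.symm
    set r := dist (α t₀) x with hr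
    have hr0 : 0 < r := dist_pos.mpr hne.symm
    have main : ∀ N : ℕ,
        |MinkAux.projS n (β 0).1 B (f (c (min (N : ℝ) r)))
          - MinkAux.projS n (β 0).1 B (f (c 0))|
        ≤ ∑ j ∈ Finset.range N, E * ρ ^ j := by
      intro N
      induction N with
      | zero =>
        simp only [Nat.cast_zero, min_eq_left hr0.le, sub_self, abs_zero,
          Finset.range_zero, Finset.sum_empty, le_refl]
      | succ k ih =>
        have hstep : |MinkAux.projS n (β 0).1 B (f (c (min ((k:ℝ)+1) r)))
            - MinkAux.projS n (β 0).1 B (f (c (min (k:ℝ) r)))| ≤ E * ρ ^ k := by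
          rcases le_or_gt r k with hrk | hrk
          · rw [min_eq_right hrk, min_eq_right (by linarith)]
            simp only [sub_self, abs_zero]
            exact mul_nonneg hE0 (pow_nonneg hρ0 k)
          · have emk : min ((k:ℝ)) r = (k:ℝ) := min_eq_left hrk.le
            have hge : (k:ℝ) ≤ min ((k:ℝ)+1) r := le_min (by linarith) hrk.le
            have hle1 : min ((k:ℝ)+1) r ≤ (k:ℝ)+1 := min_le_left _ _
            have hd1 : dist (c (min ((k:ℝ)+1) r)) (c (min (k:ℝ) r)) ≤ 1 := by
              rw [hcd, emk, abs_of_nonneg (by linarith)]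
              linarith
            have hd0 : 0 ≤ dist (c (min ((k:ℝ)+1) r)) (c (min (k:ℝ) r)) := dist_nonneg
            have hdf : dist (f (c (min ((k:ℝ)+1) r))) (f (c (min (k:ℝ) r))) ≤ C₁ + C₂ := by
              have h := hup (c (min ((k:ℝ)+1) r)) (c (min (k:ℝ) r))
              simp only at h
              nlinarith
            have hlb : ∀ s : ℝ, C₁⁻¹ * k - C₂ - D ≤ dist (f (c (min (k:ℝ) r))) (β s) := by
              intro s
              obtain ⟨t, ht⟩ := hβfα s
              have htri := dist_triangle (f (c (min (k:ℝ) r))) (β s) (f (α t))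
              have h2 := hlow (c (min (k:ℝ) r)) (α t)
              simp only at h2
              have h3 : (k:ℝ) ≤ dist (c (min (k:ℝ) r)) (α t) := by
                have hxP := hx t
                have hxt0 : dist x (α t₀) = r := by rw [hr, dist_comm]
                have hxk : dist x (c (min (k:ℝ) r)) = r - k := by
                  rw [← hcr, hcd, emk, abs_of_nonneg (by linarith)]
                have htri2 := dist_triangle x (c (min (k:ℝ) r)) (α t)
                linarith
              have hmono : C₁⁻¹ * (k:ℝ) ≤ C₁⁻¹ * dist (c (min (k:ℝ) r)) (α t) :=
                mul_le_mul_of_nonneg_left h3 (by positivity)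
              linarith
            obtain ⟨hq1k, -, -, -, hcdk⟩ := pack (f (c (min (k:ℝ) r)))
            have hqlb : Real.exp (C₁⁻¹ * k - C₂ - D) / 2
                ≤ MinkAux.projQ n (β 0).1 B (f (c (min (k:ℝ) r))) := by
              have h1 := hlb (MinkAux.projS n (β 0).1 B (f (c (min (k:ℝ) r))))
              have h2 : Real.cosh (dist (f (c (min (k:ℝ) r)))
                  (β (MinkAux.projS n (β 0).1 B (f (c (min (k:ℝ) r))))))
                  = MinkAux.projQ n (β 0).1 B (f (c (min (k:ℝ) r))) := by
                rw [hcdk (MinkAux.projS n (β 0).1 B (f (c (min (k:ℝ) r))))]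
                simp
              calc Real.exp (C₁⁻¹ * k - C₂ - D) / 2
                  ≤ Real.exp (dist (f (c (min (k:ℝ) r)))
                      (β (MinkAux.projS n (β 0).1 B (f (c (min (k:ℝ) r)))))) / 2 := by
                    have := Real.exp_le_exp.mpr h1; linarith
                _ ≤ Real.cosh (dist (f (c (min (k:ℝ) r)))
                      (β (MinkAux.projS n (β 0).1 B (f (c (min (k:ℝ) r)))))) :=
                    MinkAux.exp_half_le_cosh _
                _ = MinkAux.projQ n (β 0).1 B (f (c (min (k:ℝ) r))) := h2
            obtain ⟨hq1k', -, -, -, -⟩ := pack (f (c (min ((k:ℝ)+1) r)))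
            have hdisp := MinkAux.proj_disp hgeom hAA hBB hAB hrepr
              (f (c (min ((k:ℝ)+1) r))) (f (c (min (k:ℝ) r)))
            have hcoshd : Real.cosh (dist (f (c (min ((k:ℝ)+1) r))) (f (c (min (k:ℝ) r)))) ≤ K := by
              rw [hK]
              apply Real.cosh_le_cosh.mpr
              rw [abs_of_nonneg dist_nonneg, abs_of_nonneg (by linarith : (0:ℝ) ≤ C₁ + C₂)]
              exact hdf
            have hP' : Real.exp (C₁⁻¹ * k - C₂ - D) / 2
                ≤ MinkAux.projQ n (β 0).1 B (f (c (min ((k:ℝ)+1) r)))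
                  * MinkAux.projQ n (β 0).1 B (f (c (min (k:ℝ) r))) := by
              calc Real.exp (C₁⁻¹ * k - C₂ - D) / 2
                  = 1 * (Real.exp (C₁⁻¹ * k - C₂ - D) / 2) := (one_mul _).symm
                _ ≤ _ := mul_le_mul hq1k' hqlb (by positivity) (by linarith)
            have h6 : (MinkAux.projS n (β 0).1 B (f (c (min ((k:ℝ)+1) r)))
                - MinkAux.projS n (β 0).1 B (f (c (min (k:ℝ) r))))^2
                * (Real.exp (C₁⁻¹ * k - C₂ - D) / 2) ≤ 2 * K := by
              calc (MinkAux.projS n (β 0).1 B (f (c (min ((k:ℝ)+1) r)))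
                  - MinkAux.projS n (β 0).1 B (f (c (min (k:ℝ) r))))^2
                  * (Real.exp (C₁⁻¹ * k - C₂ - D) / 2)
                  ≤ (MinkAux.projS n (β 0).1 B (f (c (min ((k:ℝ)+1) r)))
                    - MinkAux.projS n (β 0).1 B (f (c (min (k:ℝ) r))))^2
                    * (MinkAux.projQ n (β 0).1 B (f (c (min ((k:ℝ)+1) r)))
                      * MinkAux.projQ n (β 0).1 B (f (c (min (k:ℝ) r)))) :=
                    mul_le_mul_of_nonneg_left hP' (sq_nonneg _)
                _ ≤ 2 * Real.cosh (dist (f (c (min ((k:ℝ)+1) r))) (f (c (min (k:ℝ) r)))) := hdisp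
                _ ≤ 2 * K := by linarith
            have hS2 : (MinkAux.projS n (β 0).1 B (f (c (min ((k:ℝ)+1) r)))
                - MinkAux.projS n (β 0).1 B (f (c (min (k:ℝ) r))))^2
                ≤ 4 * K * Real.exp (-(C₁⁻¹ * k - C₂ - D)) := by
              have hple : (MinkAux.projS n (β 0).1 B (f (c (min ((k:ℝ)+1) r)))
                  - MinkAux.projS n (β 0).1 B (f (c (min (k:ℝ) r))))^2
                  ≤ 4*K / Real.exp (C₁⁻¹ * k - C₂ - D) := by
                rw [le_div_iff₀ (Real.exp_pos _)]
                nlinarith [h6]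
              rwa [Real.exp_neg, ← div_eq_mul_inv]
            have heq : Real.sqrt (4 * K * Real.exp (-(C₁⁻¹ * k - C₂ - D))) = E * ρ ^ k := by
              have harg : (-(C₁⁻¹ * (k:ℝ) - C₂ - D))/2
                  = (C₂ + D)/2 + (k:ℝ) * (-(1/(2*C₁))) := by
                field_simp
                ring
              rw [Real.sqrt_mul (by positivity : (0:ℝ) ≤ 4*K), MinkAux.sqrt_exp_eq,
                Real.sqrt_mul (by norm_num : (0:ℝ) ≤ 4) K,
                show Real.sqrt (4:ℝ) = 2 by
                  rw [show (4:ℝ) = 2^2 by norm_num, Real.sqrt_sq (by norm_num : (0:ℝ) ≤ 2)]]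
              rw [harg, hE, hρ, ← Real.exp_nat_mul, hK, Real.exp_add]
              ring
            have h7 := Real.sqrt_le_sqrt hS2
            rw [Real.sqrt_sq_eq_abs, heq] at h7
            exact h7
        have htri := abs_sub_le
          (MinkAux.projS n (β 0).1 B (f (c (min ((k:ℝ)+1) r))))
          (MinkAux.projS n (β 0).1 B (f (c (min (k:ℝ) r))))
          (MinkAux.projS n (β 0).1 B (f (c 0)))
        rw [Finset.sum_range_succ]
        push_cast
        push_cast at ih
        linarith [htri, ih, hstep]
    have hNr : min ((⌈r⌉₊ : ℝ)) r = r := min_eq_right (Nat.le_ceil r)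
    have h1 := main ⌈r⌉₊
    rw [hNr, hcr, hc0] at h1
    refine h1.trans ?_
    rw [← Finset.mul_sum]
    apply mul_le_mul_of_nonneg_left ?_ hE0
    rw [geom_sum_eq (ne_of_lt hρ1)]
    have h2 : (ρ ^ ⌈r⌉₊ - 1)/(ρ - 1) = (1 - ρ ^ ⌈r⌉₊)/(1 - ρ) := by
      rw [← neg_div_neg_eq]; ring_nf
    rw [h2, inv_eq_one_div]
    apply (div_le_div_iff_of_pos_right (by linarith)).mpr
    have := pow_nonneg hρ0 ⌈r⌉₊
    linarith
  apply Metric.diam_le_of_forall_dist_le hbound0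
  rintro p ⟨x, hxP, hproj⟩ p' ⟨x', hxP', hproj'⟩
  rw [huniq _ _ hproj, huniq _ _ hproj']
  rw [hβ' (MinkAux.projS n (β 0).1 B (f x)) (MinkAux.projS n (β 0).1 B (f x'))]
  have k1 := key x hxP
  have k2 := key x' hxP'
  have htri := abs_sub_le (MinkAux.projS n (β 0).1 B (f x))
    (MinkAux.projS n (β 0).1 B (f (α t₀))) (MinkAux.projS n (β 0).1 B (f x'))
  have k2' : |MinkAux.projS n (β 0).1 B (f (α t₀)) - MinkAux.projS n (β 0).1 B (f x')|
      ≤ E * (1-ρ)⁻¹ := by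
    rw [abs_sub_comm]; exact k2
  linarith
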